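/- With the setup of Neyman's variance formula (complete randomization, difference-in-means τ̂), one has Var(τ̂) ≤ V₁²/n₁ + V₀²/n₀, with equality if and only if y_i(1) − y_i(0) is constant across i. -/

import Mathlib

/-!
With `f i = y1 i / n₁ + y0 i / n₀`, the estimator `τ̂` is, up to an additive constant, the sum of
`f` over the treated units, a uniformly random `n₁`-subset. Counting the subsets that contain one
or two given units shows that such a sum has variance `n₁ n₀ / (n - 1)` times the population
variance of `f`. Expanding the square then shows that the Neyman bound exceeds this by exactly
the population variance of `y1 - y0` divided by `n - 1`, which vanishes iff the unit-level
effects are constant.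
-/

open Finset
open scoped BigOperators

-- Divisor `#s`, whereas the `V₁²`, `V₀²` of the statement have divisor `n - 1`.
noncomputable def uniformVariance {α : Type*} (s : Finset α) (g : α → ℝ) : ℝ :=
  𝔼 x ∈ s, (g x - 𝔼 y ∈ s, g y) ^ 2

section UniformVariance

variable {α β : Type*} {s : Finset α} {g : α → ℝ}

lemma uniformVariance_eq_one_div_mul_sum (s : Finset α) (g : α → ℝ) :
    uniformVariance s g = 1 / #s * ∑ x ∈ s, (g x - 1 / #s * ∑ y ∈ s, g y) ^ 2 := by
  simp only [uniformVariance, expect_eq_sum_div_card, one_div_mul_eq_div]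

lemma uniformVariance_nonneg : 0 ≤ uniformVariance s g :=
  expect_nonneg fun _ _ => sq_nonneg _

lemma uniformVariance_eq_zero_iff : uniformVariance s g = 0 ↔ ∃ c, ∀ x ∈ s, g x = c := by
  rw [uniformVariance, expect_eq_zero_iff_of_nonneg fun _ _ => sq_nonneg _]
  constructor
  · exact fun h => ⟨_, fun x hx => sub_eq_zero.1 (pow_eq_zero_iff two_ne_zero |>.1 (h x hx))⟩
  · rintro ⟨c, hc⟩ x hx
    rw [expect_congr rfl hc, expect_const ⟨x, hx⟩, hc x hx, sub_self, zero_pow two_ne_zero]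

lemma uniformVariance_eq_expect_sq_sub_sq :
    uniformVariance s g = 𝔼 x ∈ s, g x ^ 2 - (𝔼 x ∈ s, g x) ^ 2 := by
  obtain rfl | hs := s.eq_empty_or_nonempty
  · simp [uniformVariance]
  set m := 𝔼 x ∈ s, g x
  calc uniformVariance s g = 𝔼 x ∈ s, (g x ^ 2 - 2 * m * g x + m ^ 2) :=
        expect_congr rfl fun _ _ => by ring
    _ = _ := by rw [expect_add_distrib, expect_sub_distrib, ← mul_expect, expect_const hs]; ring

lemma uniformVariance_sub_const (c : ℝ) :
    uniformVariance s (fun x => g x - c) = uniformVariance s g := by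
  obtain rfl | hs := s.eq_empty_or_nonempty
  · simp [uniformVariance]
  simp only [uniformVariance, expect_sub_distrib, expect_const hs, sub_sub_sub_cancel_right]

lemma uniformVariance_nbij' {t : Finset β} {h : β → ℝ} (i : α → β) (j : β → α)
    (hi : ∀ a ∈ s, i a ∈ t) (hj : ∀ b ∈ t, j b ∈ s)
    (left_inv : ∀ a ∈ s, j (i a) = a) (right_inv : ∀ b ∈ t, i (j b) = b)
    (hgh : ∀ a ∈ s, g a = h (i a)) : uniformVariance s g = uniformVariance t h := by
  have hmean : 𝔼 x ∈ s, g x = 𝔼 y ∈ t, h y := expect_nbij' i j hi hj left_inv right_inv hgh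
  exact expect_nbij' i j hi hj left_inv right_inv fun a ha => by rw [hgh a ha, hmean]

lemma uniformVariance_div_add_div_sub_eq (y₁ y₀ : α → ℝ) {m₁ m₀ : ℝ} (h₁ : m₁ ≠ 0)
    (h₀ : m₀ ≠ 0) (hm : m₁ + m₀ = #s) :
    uniformVariance s y₁ / m₁ + uniformVariance s y₀ / m₀ -
        m₁ * m₀ / #s * uniformVariance s (fun i => y₁ i / m₁ + y₀ i / m₀) =
      uniformVariance s (fun i => y₁ i - y₀ i) / #s := by
  obtain rfl | hs := s.eq_empty_or_nonempty
  · simp [uniformVariance]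
  set Y₁ : ℝ := 𝔼 i ∈ s, y₁ i
  set Y₀ : ℝ := 𝔼 i ∈ s, y₀ i
  have hmean : 𝔼 i ∈ s, (y₁ i / m₁ + y₀ i / m₀) = Y₁ / m₁ + Y₀ / m₀ := by
    rw [expect_add_distrib, expect_div, expect_div]
  calc _ = 𝔼 i ∈ s, ((y₁ i - Y₁) ^ 2 / m₁ + (y₀ i - Y₀) ^ 2 / m₀ -
          m₁ * m₀ / #s * (y₁ i / m₁ + y₀ i / m₀ - (Y₁ / m₁ + Y₀ / m₀)) ^ 2) := by
        rw [uniformVariance, uniformVariance, uniformVariance, hmean, expect_sub_distrib,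
          expect_add_distrib, expect_div, expect_div, mul_expect]
    _ = 𝔼 i ∈ s, (y₁ i - y₀ i - (Y₁ - Y₀)) ^ 2 / #s := by
        refine expect_congr rfl fun i _ => ?_
        have hn : (#s : ℝ) ≠ 0 := by positivity
        rw [← hm] at hn ⊢
        field_simp
        ring
    _ = _ := by rw [uniformVariance, expect_sub_distrib, expect_div]

lemma one_div_sub_one_mul_sum_sq_sub_mean {N : ℝ} (hN : (#s : ℝ) = N) :
    1 / (N - 1) * ∑ x ∈ s, (g x - 1 / N * ∑ y ∈ s, g y) ^ 2 =
      N / (N - 1) * uniformVariance s g := by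
  obtain rfl | hs := s.eq_empty_or_nonempty
  · simp [uniformVariance]
  have hN0 : N ≠ 0 := by rw [← hN]; positivity
  rw [uniformVariance_eq_one_div_mul_sum, hN]
  field_simp

end UniformVariance

lemma diffInMeans_eq_sum_filter_sub {ι : Type*} [Fintype ι] (a : ι → Bool) (y₁ y₀ : ι → ℝ)
    (m₁ m₀ : ℝ) :
    1 / m₁ * ∑ i ∈ univ.filter (fun i => a i = true), y₁ i
        - 1 / m₀ * ∑ i ∈ univ.filter (fun i => a i = false), y₀ i =
      ∑ i ∈ univ.filter (fun i => a i = true), (y₁ i / m₁ + y₀ i / m₀) - (∑ i, y₀ i) / m₀ := by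
  have hsplit := sum_filter_add_sum_filter_not univ (fun i => a i = true) y₀
  simp only [Bool.not_eq_true] at hsplit
  rw [sum_add_distrib, ← sum_div, ← sum_div, ← hsplit]
  ring

lemma sum_sum_eq_sum_card_filter_mul {α κ R : Type*} [NonAssocSemiring R] [DecidableEq κ]
    {P : Finset α} {U : Finset κ} (φ : α → Finset κ) (hφ : ∀ t ∈ P, φ t ⊆ U) (g : κ → R) :
    ∑ t ∈ P, ∑ x ∈ φ t, g x = ∑ x ∈ U, (#{t ∈ P | x ∈ φ t} : R) * g x := by
  rw [sum_comm' (t' := U) (s' := fun x => {t ∈ P | x ∈ φ t})]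
  · simp only [sum_const, nsmul_eq_mul]
  · intro t x
    simp only [mem_filter]
    exact ⟨fun ⟨ht, hx⟩ => ⟨⟨ht, hx⟩, hφ t ht hx⟩, fun ⟨⟨ht, hx⟩, _⟩ => ⟨ht, hx⟩⟩

section SimpleRandomSampling

variable {ι : Type*} [DecidableEq ι] {s : Finset ι} {k : ℕ}

-- Multiplied out rather than stated as `(#s - 1).choose (k - 1)`, which would need truncated
-- subtraction in `ℕ` and fail at `k = 0`.
lemma card_filter_mem_powersetCard_mul_card {i : ι} (hi : i ∈ s) :
    (#{t ∈ s.powersetCard k | i ∈ t} : ℝ) * #s = k * (#s).choose k := by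
  obtain ⟨m, hm⟩ := Nat.exists_eq_add_one_of_ne_zero (card_ne_zero_of_mem hi)
  cases k with
  | zero => simp
  | succ k =>
    have hcount := card_filter_powersetCard_subset {i} s (k + 1)
      (singleton_subset_iff.2 hi) (by simp)
    simp only [singleton_subset_iff, card_singleton, add_tsub_cancel_right, hm] at hcount
    rw [hcount, hm]
    exact_mod_cast by linarith [Nat.add_one_mul_choose_eq m k]

lemma card_filter_mem_mem_powersetCard_mul_of_ne {i j : ι} (hi : i ∈ s) (hj : j ∈ s)
    (hij : i ≠ j) :
    (#{t ∈ s.powersetCard k | i ∈ t ∧ j ∈ t} : ℝ) * (#s * (#s - 1)) =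
      k * (k - 1) * (#s).choose k := by
  have hpair : #{i, j} = 2 := card_pair hij
  have hsub : {i, j} ⊆ s := insert_subset hi (singleton_subset_iff.2 hj)
  obtain ⟨m, hm⟩ : ∃ m, #s = m + 2 := ⟨#s - 2, by have := card_le_card hsub; omega⟩
  rcases lt_or_ge k 2 with hk | hk
  · have hempty : {t ∈ s.powersetCard k | i ∈ t ∧ j ∈ t} = ∅ :=
      filter_eq_empty_iff.2 fun t ht ⟨hit, hjt⟩ => by
        have := card_le_card (insert_subset hit (singleton_subset_iff.2 hjt))
        rw [hpair, (mem_powersetCard.1 ht).2] at this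
        omega
    interval_cases k <;> simp [hempty]
  obtain ⟨k, rfl⟩ := Nat.exists_eq_add_of_le' hk
  have hcount := card_filter_powersetCard_subset {i, j} s (k + 2) hsub (by omega)
  simp only [insert_subset_iff, singleton_subset_iff, hpair, hm, add_tsub_cancel_right] at hcount
  have hchoose : (m + 2) * ((m + 1) * m.choose k) = (m + 2).choose (k + 2) * (k + 2) * (k + 1) := by
    rw [Nat.add_one_mul_choose_eq, ← mul_assoc, Nat.add_one_mul_choose_eq]
  have hchooseR := congrArg (Nat.cast : ℕ → ℝ) hchoose
  push_cast at hchooseR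
  rw [hcount, hm]
  push_cast
  linear_combination hchooseR

lemma card_filter_mem_mem_powersetCard_mul {i j : ι} (hi : i ∈ s) (hj : j ∈ s) :
    (#{t ∈ s.powersetCard k | i ∈ t ∧ j ∈ t} : ℝ) * (#s * (#s - 1)) =
      k * (#s).choose k * ((k - 1) + (#s - k) * if i = j then 1 else 0) := by
  by_cases hij : i = j
  · subst hij
    simp only [and_self, if_true, mul_one]
    rw [← mul_assoc, card_filter_mem_powersetCard_mul_card hi]
    ring
  · rw [card_filter_mem_mem_powersetCard_mul_of_ne hi hj hij, if_neg hij]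
    ring

lemma sum_powersetCard_sum_mul_card (f : ι → ℝ) :
    (∑ t ∈ s.powersetCard k, ∑ i ∈ t, f i) * #s = k * (#s).choose k * ∑ i ∈ s, f i := by
  rw [sum_sum_eq_sum_card_filter_mul (fun t => t) fun t ht => (mem_powersetCard.1 ht).1, sum_mul,
    mul_sum]
  refine sum_congr rfl fun i hi => ?_
  rw [mul_right_comm, card_filter_mem_powersetCard_mul_card hi]

lemma sum_powersetCard_sq_sum_mul (f : ι → ℝ) :
    (∑ t ∈ s.powersetCard k, (∑ i ∈ t, f i) ^ 2) * (#s * (#s - 1)) =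
      k * (#s).choose k * ((#s - k) * ∑ i ∈ s, f i ^ 2 + (k - 1) * (∑ i ∈ s, f i) ^ 2) := by
  have hsq : ∀ t : Finset ι, (∑ i ∈ t, f i) ^ 2 = ∑ p ∈ t ×ˢ t, f p.1 * f p.2 := fun t => by
    rw [sq, sum_mul_sum, sum_product]
  rw [sum_congr rfl fun t _ => hsq t, sum_sum_eq_sum_card_filter_mul (fun t => t ×ˢ t)
    fun t ht => product_subset_product (mem_powersetCard.1 ht).1 (mem_powersetCard.1 ht).1]
  simp only [mem_product]
  rw [sum_product, sum_mul]
  calc ∑ x ∈ s, (∑ y ∈ s, (#{t ∈ s.powersetCard k | x ∈ t ∧ y ∈ t} : ℝ) * (f x * f y)) *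
        (#s * (#s - 1))
      = ∑ x ∈ s, ∑ y ∈ s, k * (#s).choose k * ((k - 1) + (#s - k) * if x = y then 1 else 0) *
          (f x * f y) := by
        refine sum_congr rfl fun x hx => ?_
        rw [sum_mul]
        refine sum_congr rfl fun y hy => ?_
        rw [← card_filter_mem_mem_powersetCard_mul hx hy]
        ring
    _ = _ := by
        simp only [mul_add, add_mul, sum_add_distrib, mul_ite, ite_mul, mul_one, mul_zero, zero_mul,
          sum_ite_eq, ← mul_sum, ← sum_mul, sq]
        rw [sum_congr rfl fun x hx => if_pos hx, ← mul_sum]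
        ring

theorem uniformVariance_powersetCard_sum (f : ι → ℝ) (hk : k ≤ #s) (hs : 1 < #s) :
    uniformVariance (s.powersetCard k) (fun t => ∑ i ∈ t, f i) =
      k * (#s - k) / (#s - 1) * uniformVariance s f := by
  have hn : (#s : ℝ) ≠ 0 := by positivity
  have hn1 : (#s : ℝ) - 1 ≠ 0 := sub_ne_zero.2 (by exact_mod_cast hs.ne')
  have hN : ((#s).choose k : ℝ) ≠ 0 := by exact_mod_cast (Nat.choose_pos hk).ne'
  simp only [uniformVariance_eq_expect_sq_sub_sq, expect_eq_sum_div_card, card_powersetCard]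
  rw [eq_div_of_mul_eq hn (sum_powersetCard_sum_mul_card f),
    eq_div_of_mul_eq (mul_ne_zero hn hn1) (sum_powersetCard_sq_sum_mul f)]
  field_simp
  ring

lemma uniformVariance_assignments_eq_powersetCard [Fintype ι] (k : ℕ) (g : Finset ι → ℝ) :
    uniformVariance (univ.filter fun a : ι → Bool => #(univ.filter fun j => a j = true) = k)
        (fun a => g (univ.filter fun j => a j = true)) =
      uniformVariance (univ.powersetCard k) g :=
  uniformVariance_nbij' (fun a => univ.filter fun j => a j = true) (fun t j => decide (j ∈ t))
    (fun a ha => by simpa [mem_powersetCard] using ha)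
    (fun t ht => by simpa [mem_powersetCard] using ht)
    (fun a _ => by ext j; simp)
    (fun t _ => by ext j; simp)
    (fun _ _ => rfl)

end SimpleRandomSampling

open Finset in
/-- Conservativeness of the Neymanian variance bound: under complete
randomization, `Var(τ̂) ≤ V₁²/n₁ + V₀²/n₀`, with equality if and only if the
unit-level effects `yᵢ(1) − yᵢ(0)` are constant across units. -/
theorem neyman_variance_conservative {n n₁ : ℕ}
    (hn₁pos : 0 < n₁) (hn₁lt : n₁ < n) (y1 y0 : Fin n → ℝ) :
    let n₀ : ℕ := n - n₁
    let D : Finset (Fin n → Bool) :=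
      univ.filter (fun a => (univ.filter (fun j => a j = true)).card = n₁)
    let τhat : (Fin n → Bool) → ℝ := fun a =>
      (1 / (n₁ : ℝ)) * ∑ i ∈ univ.filter (fun i => a i = true), y1 i
        - (1 / (n₀ : ℝ)) * ∑ i ∈ univ.filter (fun i => a i = false), y0 i
    let ybar1 : ℝ := (1 / (n : ℝ)) * ∑ i, y1 i
    let ybar0 : ℝ := (1 / (n : ℝ)) * ∑ i, y0 i
    let V1 : ℝ := (1 / ((n : ℝ) - 1)) * ∑ i, (y1 i - ybar1) ^ 2
    let V0 : ℝ := (1 / ((n : ℝ) - 1)) * ∑ i, (y0 i - ybar0) ^ 2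
    let Var : ℝ := (1 / (D.card : ℝ)) * ∑ a ∈ D,
        (τhat a - (1 / (D.card : ℝ)) * ∑ a' ∈ D, τhat a') ^ 2
    Var ≤ V1 / (n₁ : ℝ) + V0 / (n₀ : ℝ)
    ∧ (Var = V1 / (n₁ : ℝ) + V0 / (n₀ : ℝ)
        ↔ ∃ c : ℝ, ∀ i, y1 i - y0 i = c) := by
  intro n₀ D τhat ybar1 ybar0 V1 V0 Var
  have hn₀ : (n₀ : ℝ) = n - n₁ := Nat.cast_sub hn₁lt.le
  have hn₁R : (0 : ℝ) < n₁ := by exact_mod_cast hn₁pos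
  have hn₀R : (0 : ℝ) < n₀ := by rw [hn₀]; exact sub_pos.2 (by exact_mod_cast hn₁lt)
  have hn : (0 : ℝ) < n := by exact_mod_cast (by omega : 0 < n)
  have hn1 : (0 : ℝ) < n - 1 := sub_pos.2 (by exact_mod_cast (by omega : 1 < n))
  have hcard : (#(univ : Finset (Fin n)) : ℝ) = n := by simp
  set f : Fin n → ℝ := fun i => y1 i / n₁ + y0 i / n₀ with hf
  have hVar : Var = n₁ * n₀ / (n - 1) * uniformVariance univ f := by
    calc Var = uniformVariance D τhat := (uniformVariance_eq_one_div_mul_sum D τhat).symm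
      _ = uniformVariance D (fun a => ∑ i ∈ univ.filter (fun j => a j = true), f i) := by
        simp only [τhat, diffInMeans_eq_sum_filter_sub, uniformVariance_sub_const]
        rfl
      _ = uniformVariance (univ.powersetCard n₁) (fun t => ∑ i ∈ t, f i) :=
        uniformVariance_assignments_eq_powersetCard n₁ fun t => ∑ i ∈ t, f i
      _ = _ := by
        rw [uniformVariance_powersetCard_sum f (by simpa using hn₁lt.le)
          (by rw [card_univ, Fintype.card_fin]; omega), hcard,
          hn₀]
  have hdecomp := uniformVariance_div_add_div_sub_eq (s := univ) y1 y0 hn₁R.ne' hn₀R.ne'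
    (by rw [hcard, hn₀]; ring)
  rw [hcard, ← hf] at hdecomp
  have hdeficit :
      V1 / n₁ + V0 / n₀ - Var = uniformVariance univ (fun i => y1 i - y0 i) / (n - 1) := by
    rw [show V1 = _ from one_div_sub_one_mul_sum_sq_sub_mean hcard,
      show V0 = _ from one_div_sub_one_mul_sum_sq_sub_mean hcard, hVar]
    linear_combination (norm := skip) (n / (n - 1) : ℝ) * hdecomp
    field_simp
    ring
  refine ⟨sub_nonneg.1 (hdeficit ▸ div_nonneg uniformVariance_nonneg hn1.le), ?_⟩
  rw [eq_comm, ← sub_eq_zero, hdeficit, div_eq_zero_iff, or_iff_left hn1.ne',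
    uniformVariance_eq_zero_iff]
  simp only [mem_univ, forall_const]
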